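/- Let q be a self-join-free Boolean conjunctive query with n atoms whose attack graph is acyclic, and let db be a database instance. Let ≺1 and ≺2 be two topological sorts of the attack graph of q. Then every n-∀embedding of q in db relative to ≺1 is an n-∀embedding of q in db relative to ≺2. -/

import Mathlib

open scoped Classical

/-! ## Variables, constants, relation names -/

abbrev Var : Type := ℕ
abbrev RelName : Type := ℕ

/-- A term: a variable or a constant (a non-negative rational). -/
inductive Trm : Type where
  | var : Var → Trm
  | const : ℚ≥0 → Trm
deriving DecidableEq

/-- An atom `R(x̲, y)`: relation name, primary-key arguments, remaining arguments. -/
structure DBAtom : Type where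
  rel : RelName
  keyArgs : List Trm
  nonkeyArgs : List Trm
deriving DecidableEq, Inhabited

/-- A fact: an atom without variables. -/
structure DBFact : Type where
  rel : RelName
  keyArgs : List ℚ≥0
  nonkeyArgs : List ℚ≥0
deriving DecidableEq

def Trm.var? : Trm → Option Var
  | .var v => some v
  | .const _ => none

def Trm.const? : Trm → Option ℚ≥0
  | .var _ => none
  | .const c => some c

def DBAtom.keyVars (F : DBAtom) : Finset Var := (F.keyArgs.filterMap Trm.var?).toFinset

def DBAtom.allVars (F : DBAtom) : Finset Var :=
  ((F.keyArgs ++ F.nonkeyArgs).filterMap Trm.var?).toFinset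

def DBAtom.notkeyVars (F : DBAtom) : Finset Var := F.allVars \ F.keyVars

def qVars (q : List DBAtom) : Finset Var := q.foldr (fun F s => F.allVars ∪ s) ∅

/-- Self-join-free: pairwise distinct relation names. -/
def SelfJoinFree (q : List DBAtom) : Prop := (q.map DBAtom.rel).Nodup

def KeyEqual (f g : DBFact) : Prop := f.rel = g.rel ∧ f.keyArgs = g.keyArgs

def DBConsistent (s : Finset DBFact) : Prop :=
  ∀ f ∈ s, ∀ g ∈ s, KeyEqual f g → f = g

/-- A repair: an inclusion-maximal consistent subset. -/
def IsRepair (db r : Finset DBFact) : Prop :=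
  r ⊆ db ∧ DBConsistent r ∧
    ∀ s : Finset DBFact, r ⊆ s → s ⊆ db → DBConsistent s → s = r

/-! ## Valuations (partial maps from variables to constants) -/

abbrev Assignment : Type := Var → Option ℚ≥0

def Assignment.Dom (θ : Assignment) : Set Var := {v | θ v ≠ none}

def Assignment.ExtendsA (μ θ : Assignment) : Prop :=
  ∀ (v : Var) (c : ℚ≥0), θ v = some c → μ v = some c

noncomputable def Assignment.restrict (θ : Assignment) (S : Set Var) : Assignment :=
  fun v => if v ∈ S then θ v else none

def emptyAssignment : Assignment := fun _ => none

/-- Combination of two valuations (the first takes precedence). -/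
def Assignment.comb (θ μ : Assignment) : Assignment :=
  fun v => (θ v).orElse (fun _ => μ v)

def applyTrm (θ : Assignment) : Trm → Trm
  | .var v => (θ v).elim (Trm.var v) Trm.const
  | .const c => .const c

def applyAtom (θ : Assignment) (F : DBAtom) : DBAtom :=
  ⟨F.rel, F.keyArgs.map (applyTrm θ), F.nonkeyArgs.map (applyTrm θ)⟩

def applyQ (θ : Assignment) (q : List DBAtom) : List DBAtom := q.map (applyAtom θ)

def DBAtom.toFact? (F : DBAtom) : Option DBFact := do
  let ks ← F.keyArgs.mapM Trm.const?
  let ns ← F.nonkeyArgs.mapM Trm.const?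
  pure (DBFact.mk F.rel ks ns)

def AtomIn (s : Finset DBFact) (F : DBAtom) : Prop := ∃ f ∈ s, F.toFact? = some f

/-- `(s, θ) ⊨ q`: θ extends to a valuation over dom(θ) ∪ vars(q) mapping all atoms of q into s. -/
def Entails (s : Finset DBFact) (θ : Assignment) (q : List DBAtom) : Prop :=
  ∃ μ : Assignment, μ.Dom = θ.Dom ∪ ↑(qVars q) ∧ μ.ExtendsA θ ∧
    ∀ F ∈ q, AtomIn s (applyAtom μ F)

/-! ## Functional dependencies -/

def FDSatT (N : Set (Var → ℚ≥0)) (X Y : Finset Var) : Prop :=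
  ∀ t₁ ∈ N, ∀ t₂ ∈ N, (∀ x ∈ X, t₁ x = t₂ x) → ∀ y ∈ Y, t₁ y = t₂ y

/-- Standard logical implication of functional dependencies. -/
def FDImp (fds : Set (Finset Var × Finset Var)) (X Y : Finset Var) : Prop :=
  ∀ N : Set (Var → ℚ≥0), (∀ fd ∈ fds, FDSatT N fd.1 fd.2) → FDSatT N X Y

def FDSet (q : List DBAtom) : Set (Finset Var × Finset Var) :=
  {p | ∃ F ∈ q, p = (F.keyVars, F.allVars)}

def keycl (F : DBAtom) (q : List DBAtom) : Set Var :=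
  {x | x ∈ qVars q ∧ FDImp (FDSet (q.erase F)) F.keyVars {x}}

/-! ## Attacks and the attack graph -/

def AdjIn (q : List DBAtom) (a b : Var) : Prop :=
  ∃ G ∈ q, a ∈ G.allVars ∧ b ∈ G.allVars

/-- Atom F attacks variable x in q. -/
def AttacksVar (q : List DBAtom) (F : DBAtom) (x : Var) : Prop :=
  ∃ l : List Var, (∀ v ∈ l, v ∉ keycl F q) ∧
    (∃ h, l.head? = some h ∧ h ∈ F.notkeyVars) ∧
    l.getLast? = some x ∧ l.Chain' (AdjIn q)

def AttacksAtom (q : List DBAtom) (F G : DBAtom) : Prop :=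
  ∃ x ∈ G.allVars, AttacksVar q F x

def Unattacked (q : List DBAtom) (v : Var) : Prop := ∀ F ∈ q, ¬ AttacksVar q F v

/-- The list order of q is a topological sort of its (hence acyclic) attack graph. -/
def IsTopoSort (q : List DBAtom) : Prop :=
  ∀ i j : Fin q.length, q.get i ≠ q.get j →
    AttacksAtom q (q.get i) (q.get j) → (i : ℕ) < (j : ℕ)

/-! ## Embeddings and ∀embeddings (relative to the list order as topological sort) -/

def uVars (q : List DBAtom) (ℓ : ℕ) : Finset Var := qVars (q.take ℓ)

def headKey : List DBAtom → Finset Var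
  | [] => ∅
  | F :: _ => F.keyVars

/-- ℓ-embedding of q in db. -/
def IsLEmb (q : List DBAtom) (db : Finset DBFact) (ℓ : ℕ) (θ : Assignment) : Prop :=
  θ.Dom = ↑(uVars q ℓ) ∧ Entails db θ q

/-- ℓ-∀embedding of q in db. -/
def IsForallEmb (q : List DBAtom) (db : Finset DBFact) : ℕ → Assignment → Prop
  | 0, θ => IsLEmb q db 0 θ ∧ ∀ r, IsRepair db r → Entails r emptyAssignment q
  | (ℓ + 1), θ =>
      IsLEmb q db (ℓ + 1) θ ∧
      (∀ r, IsRepair db r →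
        Entails r (θ.restrict (↑(uVars q ℓ) ∪ ↑(headKey (q.drop ℓ)))) (q.drop ℓ)) ∧
      IsForallEmb q db ℓ (θ.restrict ↑(uVars q ℓ))

/-- An embedding of q in s: a valuation over vars(q) mapping all atoms of q into s. -/
def IsEmbedding (q : List DBAtom) (s : Finset DBFact) (θ : Assignment) : Prop :=
  θ.Dom = ↑(qVars q) ∧ ∀ F ∈ q, AtomIn s (applyAtom θ F)

/-- Superfrugal repair: every embedding of q in r is a ∀embedding of q in db. -/
def Superfrugal (q : List DBAtom) (db r : Finset DBFact) : Prop :=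
  IsRepair db r ∧ ∀ θ, IsEmbedding q r θ → IsForallEmb q db q.length θ

/-! ## FD satisfaction by sets of valuations; maximal consistent subsets (MCS) -/

def AgreeOn (θ₁ θ₂ : Assignment) (X : Finset Var) : Prop := ∀ x ∈ X, θ₁ x = θ₂ x

def SatFD (N : Set Assignment) (X Y : Finset Var) : Prop :=
  ∀ θ₁ ∈ N, ∀ θ₂ ∈ N, AgreeOn θ₁ θ₂ X → AgreeOn θ₁ θ₂ Y

def SatFDs (N : Set Assignment) (q : List DBAtom) : Prop :=
  ∀ fd ∈ FDSet q, SatFD N fd.1 fd.2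

/-- Maximal consistent subset of a set M of embeddings. -/
def IsMCS (q : List DBAtom) (M N : Set Assignment) : Prop :=
  N ⊆ M ∧ SatFDs N q ∧ ∀ N', N ⊆ N' → N' ⊆ M → SatFDs N' q → N' = N

/-! ## Aggregate operators -/

structure AggOp : Type where
  app : Multiset ℚ≥0 → ℚ
  nonneg : ∀ X : Multiset ℚ≥0, X ≠ 0 → 0 ≤ app X

noncomputable def AggOp.appNN (A : AggOp) (X : Multiset ℚ≥0) : ℚ≥0 := (A.app X).toNNRat

def AggOp.Assoc (A : AggOp) : Prop :=
  ∀ X Y : Multiset ℚ≥0, X ≠ 0 → A.app (X + Y) = A.app (A.appNN X ::ₘ Y)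

def AggOp.Mono (A : AggOp) : Prop :=
  ∀ x x' : List ℚ≥0, x ≠ [] → List.Forall₂ (· ≤ ·) x x' →
    ∀ Y : Multiset ℚ≥0, A.app ↑x ≤ A.app (↑x' + Y)

def evalTrm (θ : Assignment) : Trm → ℚ≥0
  | .var v => (θ v).getD 0
  | .const c => c

/-- The multiset of r-values over a (finite) set of valuations. -/
noncomputable def valsOf (N : Set Assignment) (r : Trm) : Multiset ℚ≥0 :=
  if h : N.Finite then h.toFinset.val.map (fun θ => evalTrm θ r) else 0

/-- Primitive numerical term: a (numerical) variable of the query, or a constant. -/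
def PrimTerm (q : List DBAtom) (r : Trm) : Prop :=
  (∃ v, r = Trm.var v ∧ v ∈ qVars q) ∨ (∃ c, r = Trm.const c)

/-! ## Branches and ∀key-embeddings -/

/-- γ is a branch of the ℓ-∀embedding θ. -/
def IsBranch (q : List DBAtom) (db : Finset DBFact) (ℓ : ℕ) (θ γ : Assignment) : Prop :=
  γ.ExtendsA θ ∧
  (∀ v ∈ γ.Dom \ θ.Dom, Unattacked (applyQ θ (q.drop ℓ)) v) ∧
  (∃ μ, IsForallEmb q db q.length μ ∧ μ.ExtendsA γ)

/-- γ is an (ℓ+1)-∀key-embedding: a branch of θ with domain dom(θ) ∪ key(F_{ℓ+1}). -/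
def IsKeyEmb (q : List DBAtom) (db : Finset DBFact) (ℓ : ℕ) (θ γ : Assignment) : Prop :=
  IsBranch q db ℓ θ γ ∧ γ.Dom = θ.Dom ∪ ↑(headKey (q.drop ℓ))

/-- M(θ): all ∀embeddings of q in db extending θ. -/
def Mset (q : List DBAtom) (db : Finset DBFact) (θ : Assignment) : Set Assignment :=
  {μ | IsForallEmb q db q.length μ ∧ μ.ExtendsA θ}

/-! ## Weakly connected components of the attack graph -/

def UndirectedEdge (p : List DBAtom) (F G : DBAtom) : Prop :=
  F ∈ p ∧ G ∈ p ∧ (AttacksAtom p F G ∨ AttacksAtom p G F)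

/-- S is a maximal weakly connected component of the attack graph of p. -/
def IsWCC (p : List DBAtom) (S : Set DBAtom) : Prop :=
  ∃ F₀ ∈ p, S = {G | Relation.ReflTransGen (UndirectedEdge p) F₀ G}

/-! ## rifi, sequential proofs, n-minimality -/

/-- rifi(q, s, V): valuations over V extending to a valuation over vars(q) mapping q into s. -/
def rifi (q : List DBAtom) (s : Finset DBFact) (V : Finset Var) : Set Assignment :=
  {θ | θ.Dom = ↑V ∧ ∃ μ : Assignment, μ.Dom = ↑(qVars q) ∧ μ.ExtendsA θ ∧
      ∀ F ∈ q, AtomIn s (applyAtom μ F)}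

/-- A sequential proof of FD(p) ⊨ Z → w. -/
def IsSeqProof (p : List DBAtom) (Z : Finset Var) (w : Var) (l : List DBAtom) : Prop :=
  (∀ F ∈ l, F ∈ p) ∧
  (∀ i : Fin l.length, (l.get i).keyVars ⊆ Z ∪ qVars (l.take i.1)) ∧
  w ∈ Z ∪ qVars l

/-- n-minimal repair (with X = vars(q)). -/
def NMinimal (q : List DBAtom) (db r : Finset DBFact) : Prop :=
  IsRepair db r ∧
  ¬ ∃ s : Finset DBFact, IsRepair db s ∧
      (∀ θ, IsEmbedding q s θ → IsEmbedding q r θ) ∧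
      (∃ μ, IsEmbedding q r μ ∧ ¬ IsEmbedding q s μ)

/-! ## Descending chains for aggregate operators -/

def DescChain {α β : Type*} [LT β] (F : Multiset α → β) (s t : α) : Prop :=
  ∀ i : ℕ, F (s ::ₘ Multiset.replicate (i + 1) t) < F (s ::ₘ Multiset.replicate i t)

def BoundedBy {α β : Type*} [LT β] (F : Multiset α → β) (s t : α) (m : ℕ → α) : Prop :=
  ∀ i j : ℕ, 1 ≤ j → ∀ k' k : ℕ, k' ≤ k → k ≤ i →
    F (s ::ₘ Multiset.replicate k' t) <
      F (Multiset.replicate j (m i) + (s ::ₘ Multiset.replicate k t))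

def HasBoundedDescChain {α β : Type*} [LT β] (F : Multiset α → β) : Prop :=
  ∃ s t, DescChain F s t ∧ ∃ m : ℕ → α, BoundedBy F s t m

/-!
Two topological sorts of the attack graph are linked by a sequence of exchanges of adjacent atoms
`F, G` where `F` does not attack `G` (bubble the atoms of the target order to the front one by one),
so it suffices that such an exchange preserves ∀embeddings. Only the conditions at `F` and `G`
change. Both follow by gluing a witness `ρ` of the condition at `F` with a witness `ν` of the
condition at `G`, taking `ρ` on the variables attacked by `F` and `ν` elsewhere. The functional
dependencies of the other atoms hold in a repair, so `ρ` and `ν` agree on `keycl(F, q)`; an atom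
meeting the attacked variables has all its other variables in `keycl(F, q)`, and `G` meets none
of them. For the new condition at `F`, the glueing is done in a repair that contains `θ(G)`.
-/

section AdjacentSwaps

variable {α : Type*} {R : α → α → Prop} {P : List α → Prop}

lemma move_front_of_swap
    (hswap : ∀ c F G B, ¬ R F G → P (c ++ F :: G :: B) → P (c ++ G :: F :: B)) {a : α} :
    ∀ {d e : List α}, (∀ b ∈ d, b = a ∨ ¬ R b a) → P (d ++ a :: e) → P (a :: (d ++ e)) := by
  intro d
  induction d using List.reverseRecOn with
  | nil => exact fun _ h => h
  | append_singleton d b ih =>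
    intro e hd h
    have h' : P (d ++ a :: b :: e) := by
      rcases hd b (by simp) with rfl | hba
      · simpa using h
      · simpa using hswap d b a e hba (by simpa using h)
    simpa using ih (fun x hx => hd x (by simp [hx])) h'

lemma List.Perm.of_swap {l₁ l₂ : List α}
    (hswap : ∀ c F G B, ¬ R F G → P (c ++ F :: G :: B) → P (c ++ G :: F :: B))
    (hp : l₁.Perm l₂) (hl₂ : l₂.Pairwise fun F G => ¬ R G F) (h : P l₁) : P l₂ := by
  induction l₂ generalizing l₁ P with
  | nil => rwa [hp.eq_nil] at h
  | cons a l₂ ih =>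
    obtain ⟨d, e, rfl⟩ := List.append_of_mem (hp.mem_iff.2 List.mem_cons_self)
    have hd : ∀ b ∈ d, b = a ∨ ¬ R b a := by
      intro b hb
      rcases List.mem_cons.1 (hp.mem_iff.1 (List.mem_append_left _ hb)) with rfl | hb
      · exact Or.inl rfl
      · exact Or.inr ((List.pairwise_cons.1 hl₂).1 b hb)
    exact ih (P := fun l => P (a :: l)) (fun c => hswap (a :: c))
      (List.perm_middle.symm.trans hp).cons_inv (List.pairwise_cons.1 hl₂).2
      (move_front_of_swap hswap hd h)

end AdjacentSwaps

lemma List.append_cons_eq_append_cons_cons {α : Type*} {a b c B : List α} {H F G : α}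
    (h : a ++ H :: b = c ++ G :: F :: B) :
    (∃ c', c = a ++ H :: c' ∧ b = c' ++ G :: F :: B) ∨ (a = c ∧ H = G ∧ b = F :: B) ∨
      (a = c ++ [G] ∧ H = F ∧ b = B) ∨ ∃ a', a = c ++ G :: F :: a' ∧ B = a' ++ H :: b := by
  rcases List.append_eq_append_iff.1 h with ⟨c', rfl, h'⟩ | ⟨a', rfl, h'⟩
  · rcases c' with _ | ⟨x, c'⟩
    · simp only [List.nil_append, List.cons.injEq] at h'
      exact Or.inr (Or.inl ⟨by simp, h'.1, h'.2⟩)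
    · simp only [List.cons_append, List.cons.injEq] at h'
      exact Or.inl ⟨c', by simp [h'.1], h'.2⟩
  · rcases a' with _ | ⟨x, _ | ⟨y, a'⟩⟩
    · simp only [List.nil_append, List.cons.injEq] at h'
      exact Or.inr (Or.inl ⟨by simp, h'.1.symm, h'.2.symm⟩)
    · simp only [List.cons_append, List.nil_append, List.cons.injEq] at h'
      obtain ⟨rfl, rfl, rfl⟩ := h'
      exact Or.inr (Or.inr (Or.inl ⟨rfl, rfl, rfl⟩))
    · simp only [List.cons_append, List.cons.injEq] at h'
      obtain ⟨rfl, rfl, rfl⟩ := h'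
      exact Or.inr (Or.inr (Or.inr ⟨a', by simp, rfl⟩))

namespace DBAtom

lemma mem_keyVars_iff {F : DBAtom} {x : Var} : x ∈ F.keyVars ↔ Trm.var x ∈ F.keyArgs := by
  simp only [keyVars, List.mem_toFinset, List.mem_filterMap]
  constructor
  · rintro ⟨(y | c), ht, h⟩ <;> simp_all [Trm.var?]
  · exact fun h => ⟨_, h, rfl⟩

lemma mem_allVars_iff {F : DBAtom} {x : Var} :
    x ∈ F.allVars ↔ Trm.var x ∈ F.keyArgs ∨ Trm.var x ∈ F.nonkeyArgs := by
  simp only [allVars, List.mem_toFinset, List.mem_filterMap, ← List.mem_append]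
  constructor
  · rintro ⟨(y | c), ht, h⟩ <;> simp_all [Trm.var?]
  · exact fun h => ⟨_, h, rfl⟩

lemma keyVars_subset_allVars (F : DBAtom) : F.keyVars ⊆ F.allVars :=
  fun _ hx => mem_allVars_iff.2 (Or.inl (mem_keyVars_iff.1 hx))

end DBAtom

open DBAtom

lemma mem_qVars_iff {q : List DBAtom} {x : Var} : x ∈ qVars q ↔ ∃ F ∈ q, x ∈ F.allVars := by
  induction q with
  | nil => simp [qVars]
  | cons F q ih => simp [qVars, ← ih]

lemma qVars_append (l₁ l₂ : List DBAtom) : qVars (l₁ ++ l₂) = qVars l₁ ∪ qVars l₂ := by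
  ext x
  simp only [mem_qVars_iff, List.mem_append, Finset.mem_union]
  grind

lemma qVars_perm {q q' : List DBAtom} (h : q.Perm q') : qVars q = qVars q' := by
  ext x
  simp only [mem_qVars_iff, h.mem_iff]

def DBFact.toAtom (f : DBFact) : DBAtom :=
  ⟨f.rel, f.keyArgs.map .const, f.nonkeyArgs.map .const⟩

lemma eq_map_const_of_mapM_const? :
    ∀ {l : List Trm} {L : List ℚ≥0}, l.mapM Trm.const? = some L → l = L.map .const
  | [], L, h => by simp_all
  | (.var _) :: _, _, h => by simp [Trm.const?] at h
  | (.const c) :: l, L, h => by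
    simp only [List.mapM_cons, Trm.const?, Option.pure_def, Option.bind_eq_bind,
      Option.bind_some, Option.bind_eq_some_iff, Option.some.injEq] at h
    obtain ⟨L', hL', rfl⟩ := h
    simp [eq_map_const_of_mapM_const? hL']

lemma atomIn_iff {s : Finset DBFact} {F : DBAtom} : AtomIn s F ↔ ∃ f ∈ s, F = f.toAtom := by
  constructor
  · rintro ⟨f, hf, hF⟩
    refine ⟨f, hf, ?_⟩
    simp only [DBAtom.toFact?, Option.pure_def, Option.bind_eq_bind, Option.bind_eq_some_iff,
      Option.some.injEq] at hF
    obtain ⟨ks, hks, ns, hns, rfl⟩ := hF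
    simp [DBFact.toAtom, ← eq_map_const_of_mapM_const? hks, ← eq_map_const_of_mapM_const? hns]
  · rintro ⟨f, hf, rfl⟩
    have hconst : Trm.const? ∘ Trm.const = (pure : ℚ≥0 → Option ℚ≥0) := rfl
    have hsome (l : List ℚ≥0) : l.mapM some = some l := by
      simpa using List.mapM_pure (m := Option) (f := id) (l := l)
    exact ⟨f, hf, by simp [DBFact.toAtom, DBAtom.toFact?, hconst, hsome]⟩

lemma applyTrm_var_eq_iff {μ ν : Assignment} {x : Var} :
    applyTrm μ (.var x) = applyTrm ν (.var x) ↔ μ x = ν x := by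
  cases hμ : μ x <;> cases hν : ν x <;> simp [applyTrm, hμ, hν]

lemma map_applyTrm_eq_iff {μ ν : Assignment} {l : List Trm} :
    l.map (applyTrm μ) = l.map (applyTrm ν) ↔ ∀ x, Trm.var x ∈ l → μ x = ν x := by
  rw [List.map_eq_map_iff]
  constructor
  · exact fun h x hx => applyTrm_var_eq_iff.1 (h _ hx)
  · rintro h (x | c) ht
    exacts [applyTrm_var_eq_iff.2 (h x ht), rfl]

lemma applyAtom_eq_iff {μ ν : Assignment} {H : DBAtom} :
    applyAtom μ H = applyAtom ν H ↔ ∀ x ∈ H.allVars, μ x = ν x := by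
  simp only [applyAtom, DBAtom.mk.injEq, true_and, map_applyTrm_eq_iff, mem_allVars_iff]
  grind

lemma AtomIn.ne_none {s : Finset DBFact} {μ : Assignment} {H : DBAtom}
    (h : AtomIn s (applyAtom μ H)) {x : Var} (hx : x ∈ H.allVars) : μ x ≠ none := by
  obtain ⟨f, -, hf⟩ := atomIn_iff.1 h
  intro hnone
  have hvar : applyTrm μ (.var x) ∈ (applyAtom μ H).keyArgs ++ (applyAtom μ H).nonkeyArgs := by
    rcases mem_allVars_iff.1 hx with hx | hx
    exacts [List.mem_append_left _ (List.mem_map_of_mem hx),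
      List.mem_append_right _ (List.mem_map_of_mem hx)]
  simp [hf, DBFact.toAtom, applyTrm, hnone] at hvar

lemma AtomIn.eq_on_allVars {s : Finset DBFact} (hs : DBConsistent s) {μ ν : Assignment}
    {H : DBAtom} (hμ : AtomIn s (applyAtom μ H)) (hν : AtomIn s (applyAtom ν H))
    (hkey : ∀ x ∈ H.keyVars, μ x = ν x) : ∀ x ∈ H.allVars, μ x = ν x := by
  obtain ⟨f, hf, hfμ⟩ := atomIn_iff.1 hμ
  obtain ⟨g, hg, hgν⟩ := atomIn_iff.1 hν
  have hkeys : (applyAtom μ H).keyArgs = (applyAtom ν H).keyArgs :=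
    map_applyTrm_eq_iff.2 fun x hx => hkey x (mem_keyVars_iff.2 hx)
  have hfg : f = g := by
    refine hs f hf g hg ⟨?_, List.map_injective_iff.2 (fun _ _ h => Trm.const.inj h) ?_⟩
    · have hf := congrArg DBAtom.rel hfμ
      have hg := congrArg DBAtom.rel hgν
      simp only [applyAtom, DBFact.toAtom] at hf hg
      rw [← hf, ← hg]
    · simpa [hfμ, hgν, DBFact.toAtom] using hkeys
  exact applyAtom_eq_iff.1 (by rw [hfμ, hgν, hfg])

lemma Assignment.dom_restrict (θ : Assignment) (S : Set Var) :
    (θ.restrict S).Dom = θ.Dom ∩ S := by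
  ext x
  by_cases hx : x ∈ S <;> simp [Assignment.restrict, Assignment.Dom, hx]

lemma Assignment.restrict_restrict (θ : Assignment) (S T : Set Var) :
    (θ.restrict S).restrict T = θ.restrict (S ∩ T) := by
  funext x
  by_cases hS : x ∈ S <;> by_cases hT : x ∈ T <;> simp [Assignment.restrict, hS, hT]

lemma Assignment.restrict_eq_self {θ : Assignment} {S : Set Var} (h : θ.Dom ⊆ S) :
    θ.restrict S = θ := by
  funext x
  by_cases hx : x ∈ S
  · simp [Assignment.restrict, hx]
  · have hθx : θ x = none := not_not.1 (mt (@h x) hx)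
    simp [Assignment.restrict, hx, hθx]

lemma Entails.perm {s : Finset DBFact} {θ : Assignment} {l l' : List DBAtom}
    (hl : l.Perm l') (h : Entails s θ l) : Entails s θ l' :=
  let ⟨μ, hdom, hext, hμ⟩ := h
  ⟨μ, by rw [hdom, qVars_perm hl], hext, fun H hH => hμ H (hl.mem_iff.2 hH)⟩

def EntailsOn (s : Finset DBFact) (θ : Assignment) (S : Finset Var) (l : List DBAtom) : Prop :=
  ∃ μ : Assignment, (∀ x ∈ S, μ x = θ x) ∧ ∀ H ∈ l, AtomIn s (applyAtom μ H)

lemma EntailsOn.mono {s : Finset DBFact} {θ : Assignment} {S S' : Finset Var}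
    {l : List DBAtom} (hS : S' ⊆ S) (h : EntailsOn s θ S l) : EntailsOn s θ S' l :=
  let ⟨μ, hμθ, hμ⟩ := h
  ⟨μ, fun x hx => hμθ x (hS hx), hμ⟩

lemma EntailsOn.perm {s : Finset DBFact} {θ : Assignment} {S : Finset Var}
    {l l' : List DBAtom} (hl : l.Perm l') (h : EntailsOn s θ S l) : EntailsOn s θ S l' :=
  let ⟨μ, hμθ, hμ⟩ := h
  ⟨μ, hμθ, fun H hH => hμ H (hl.mem_iff.2 hH)⟩

lemma EntailsOn.atomIn {s : Finset DBFact} {θ : Assignment} {S : Finset Var}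
    {l : List DBAtom} (h : EntailsOn s θ S l) {H : DBAtom} (hH : H ∈ l)
    (hHS : H.allVars ⊆ S) : AtomIn s (applyAtom θ H) :=
  let ⟨_, hμθ, hμ⟩ := h
  applyAtom_eq_iff.2 (fun x hx => hμθ x (hHS hx)) ▸ hμ H hH

lemma entails_restrict_iff {s : Finset DBFact} {θ : Assignment} {S : Finset Var}
    {l : List DBAtom} (hS : ↑S ⊆ θ.Dom) :
    Entails s (θ.restrict S) l ↔ EntailsOn s θ S l := by
  constructor
  · rintro ⟨μ, -, hext, hμ⟩
    refine ⟨μ, fun x hx => ?_, hμ⟩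
    obtain ⟨c, hc⟩ := Option.ne_none_iff_exists'.1 (hS hx)
    rw [hc]
    exact hext x c (by simp [Assignment.restrict, hx, hc])
  · rintro ⟨μ, hμθ, hμ⟩
    have hdef : ↑S ∪ ↑(qVars l) ⊆ μ.Dom := by
      rintro x (hx | hx)
      · show μ x ≠ none
        rw [hμθ x hx]
        exact hS hx
      · obtain ⟨H, hH, hxH⟩ := mem_qVars_iff.1 hx
        exact (hμ H hH).ne_none hxH
    refine ⟨μ.restrict (↑S ∪ ↑(qVars l)), ?_, fun x c hc => ?_, fun H hH => ?_⟩
    · rw [Assignment.dom_restrict, Assignment.dom_restrict, Set.inter_eq_right.2 hS,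
        Set.inter_eq_right.2 hdef]
    · have hx : x ∈ S := by by_contra hx; simp [Assignment.restrict, hx] at hc
      simp only [Assignment.restrict, Finset.mem_coe, Set.mem_union, hx, true_or, if_true] at hc ⊢
      rw [hμθ x hx, hc]
    · rw [show applyAtom (μ.restrict (↑S ∪ ↑(qVars l))) H = applyAtom μ H from
        applyAtom_eq_iff.2 fun x hx => if_pos (Or.inr (mem_qVars_iff.2 ⟨H, hH, hx⟩))]
      exact hμ H hH

lemma IsRepair.exists_keyEqual_of_notMem {db r : Finset DBFact} (hr : IsRepair db r)
    {g : DBFact} (hg : g ∈ db) (hgr : g ∉ r) : ∃ h ∈ r, KeyEqual g h := by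
  by_contra! hne
  have hcons : DBConsistent (insert g r) := by
    intro a ha b hb hab
    rcases Finset.mem_insert.1 ha with rfl | har <;> rcases Finset.mem_insert.1 hb with rfl | hbr
    · rfl
    · exact absurd hab (hne b hbr)
    · exact absurd ⟨hab.1.symm, hab.2.symm⟩ (hne a har)
    · exact hr.2.1 a har b hbr hab
  exact hgr (hr.2.2 _ (Finset.subset_insert g r) (Finset.insert_subset hg hr.1) hcons ▸
    Finset.mem_insert_self g r)

lemma IsRepair.exists_repair_mem_subset_insert {db r : Finset DBFact} (hr : IsRepair db r)
    {f₀ : DBFact} (hf₀ : f₀ ∈ db) :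
    ∃ r', IsRepair db r' ∧ f₀ ∈ r' ∧ r' ⊆ insert f₀ r := by
  set r' := insert f₀ (r.filter fun g => ¬ KeyEqual g f₀)
  have hsub : r' ⊆ db :=
    Finset.insert_subset hf₀ ((Finset.filter_subset _ r).trans hr.1)
  refine ⟨r', ⟨hsub, ?_, fun s hs hsdb hscons => ?_⟩, Finset.mem_insert_self _ _,
    Finset.insert_subset_insert _ (Finset.filter_subset _ r)⟩
  · intro a ha b hb hab
    simp only [r', Finset.mem_insert, Finset.mem_filter] at ha hb
    rcases ha with rfl | ha <;> rcases hb with rfl | hb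
    · rfl
    · exact absurd ⟨hab.1.symm, hab.2.symm⟩ hb.2
    · exact absurd hab ha.2
    · exact hr.2.1 a ha.1 b hb.1 hab
  · refine (Finset.Subset.antisymm hs fun g hg => ?_).symm
    by_cases hgf₀ : KeyEqual g f₀
    · rw [hscons g hg f₀ (hs (Finset.mem_insert_self _ _)) hgf₀]
      exact Finset.mem_insert_self _ _
    have hgr : g ∈ r := by
      by_contra hgr
      obtain ⟨h, hh, hgh⟩ := hr.exists_keyEqual_of_notMem (hsdb hg) hgr
      have hhf₀ : ¬ KeyEqual h f₀ := fun hk => hgf₀ ⟨hgh.1.trans hk.1, hgh.2.trans hk.2⟩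
      have hhs : h ∈ s := hs (Finset.mem_insert_of_mem (Finset.mem_filter.2 ⟨hh, hhf₀⟩))
      exact hgr (hscons g hg h hhs hgh ▸ hh)
    exact Finset.mem_insert_of_mem (Finset.mem_filter.2 ⟨hgr, hgf₀⟩)

lemma SelfJoinFree.nodup {q : List DBAtom} (h : SelfJoinFree q) : q.Nodup :=
  List.Nodup.of_map _ h

lemma SelfJoinFree.perm {q q' : List DBAtom} (h : SelfJoinFree q) (hq : q.Perm q') :
    SelfJoinFree q' :=
  (hq.map DBAtom.rel).nodup_iff.1 h

lemma SelfJoinFree.rel_ne {G H : DBAtom} {l : List DBAtom} (h : SelfJoinFree (G :: l))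
    (hH : H ∈ l) : H.rel ≠ G.rel :=
  fun hrel => (List.nodup_cons.1 h).1 (hrel ▸ List.mem_map_of_mem hH)

lemma fdSatT_pair {t₁ t₂ : Var → ℚ≥0} {X Y : Finset Var}
    (h : (∀ x ∈ X, t₁ x = t₂ x) → ∀ y ∈ Y, t₁ y = t₂ y) : FDSatT {t₁, t₂} X Y := by
  rintro a (rfl | rfl) b (rfl | rfl) hab y hy
  · rfl
  · exact h hab y hy
  · exact (h (fun x hx => (hab x hx).symm) y hy).symm
  · rfl

lemma eq_on_keycl {q c B : List DBAtom} {F : DBAtom} (hsjf : SelfJoinFree q)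
    (hq : q = c ++ F :: B) {s : Finset DBFact} (hs : DBConsistent s) {ρ ν : Assignment}
    (hagree : ∀ x ∈ qVars c ∪ F.keyVars, ρ x = ν x)
    (hρ : ∀ H ∈ B, AtomIn s (applyAtom ρ H)) (hν : ∀ H ∈ B, AtomIn s (applyAtom ν H)) :
    ∀ x ∈ keycl F q, ρ x = ν x := by
  -- `keycl` is defined through total tuples: encode the partial valuations injectively
  let e : Option ℚ≥0 → ℚ≥0 := fun o => (Encodable.encode o : ℚ≥0)
  have henc : Function.Injective e := Nat.cast_injective.comp Encodable.encode_injective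
  intro x hx
  refine henc (hx.2 {e ∘ ρ, e ∘ ν} ?_ _ (Set.mem_insert _ _) _ (Set.mem_insert_of_mem _ rfl)
    (fun y hy => congrArg e (hagree y (Finset.mem_union_right _ hy))) x
    (Finset.mem_singleton_self x))
  rintro _ ⟨H, hH, rfl⟩
  refine fdSatT_pair fun hkey y hy => congrArg e ?_
  have hkey' : ∀ z ∈ H.keyVars, ρ z = ν z := fun z hz => henc (hkey z hz)
  obtain ⟨hHF, hHq⟩ := (hsjf.nodup.mem_erase_iff).1 hH
  rw [hq, List.mem_append, List.mem_cons] at hHq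
  rcases hHq with hHc | rfl | hHB
  · exact hagree y (Finset.mem_union_left _ (mem_qVars_iff.2 ⟨H, hHc, hy⟩))
  · exact absurd rfl hHF
  · exact (hρ H hHB).eq_on_allVars hs (hν H hHB) hkey' y hy

lemma attacksVar_of_mem_notkeyVars {q : List DBAtom} {F : DBAtom} {x : Var}
    (hx : x ∈ F.notkeyVars) (hcl : x ∉ keycl F q) : AttacksVar q F x :=
  ⟨[x], by simpa using hcl, ⟨x, rfl, hx⟩, rfl, List.isChain_singleton x⟩

lemma AttacksVar.extend {q : List DBAtom} {F H : DBAtom} {z x : Var} (hz : AttacksVar q F z)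
    (hH : H ∈ q) (hzH : z ∈ H.allVars) (hxH : x ∈ H.allVars) (hcl : x ∉ keycl F q) :
    AttacksVar q F x := by
  obtain ⟨l, hnotcl, ⟨h, hh, hhF⟩, hlast, hchain⟩ := hz
  refine ⟨l ++ [x], ?_, ⟨h, ?_, hhF⟩, by simp, ?_⟩
  · simpa [or_imp, forall_and] using ⟨hnotcl, hcl⟩
  · cases l <;> simp_all
  · refine List.isChain_append.2 ⟨hchain, List.isChain_singleton x, ?_⟩
    simp only [hlast, Option.mem_def, Option.some.injEq, List.head?_cons]
    rintro _ rfl _ rfl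
    exact ⟨H, hH, hzH, hxH⟩

lemma keycl_perm {q q' : List DBAtom} (h : q.Perm q') (F : DBAtom) :
    keycl F q = keycl F q' := by
  have hFD : FDSet (q.erase F) = FDSet (q'.erase F) := by
    ext; simp [FDSet, (h.erase F).mem_iff]
  simp only [keycl, qVars_perm h, hFD]

lemma attacksAtom_perm {q q' : List DBAtom} (h : q.Perm q') (F G : DBAtom) :
    AttacksAtom q F G ↔ AttacksAtom q' F G := by
  have hadj : AdjIn q = AdjIn q' := by
    ext; simp only [AdjIn, h.mem_iff]
  simp only [AttacksAtom, AttacksVar, keycl_perm h, hadj]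

lemma IsTopoSort.pairwise {q : List DBAtom} (ht : IsTopoSort q) (hq : q.Nodup) :
    q.Pairwise fun F G => ¬ AttacksAtom q G F := by
  refine List.pairwise_iff_getElem.2 fun i j hi hj hij hA => ?_
  have hne : q[j] ≠ q[i] := fun h => hij.ne' ((hq.getElem_inj_iff).1 h)
  exact (ht ⟨j, hj⟩ ⟨i, hi⟩ hne hA).not_gt hij

/-- An atom meeting the variables attacked by `F` has all its other variables in `keycl F q`,
on which `ρ` and `ν` agree. -/
lemma atomIn_piecewise_attacksVar {q c B : List DBAtom} {F : DBAtom} (hsjf : SelfJoinFree q)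
    (hq : q = c ++ F :: B) {s : Finset DBFact} (hs : DBConsistent s) {ρ ν : Assignment}
    (hagree : ∀ x ∈ qVars c ∪ F.keyVars, ρ x = ν x)
    (hρ : ∀ H ∈ F :: B, AtomIn s (applyAtom ρ H)) (hν : ∀ H ∈ B, AtomIn s (applyAtom ν H)) :
    ∀ H ∈ F :: B, AtomIn s (applyAtom ({x | AttacksVar q F x}.piecewise ρ ν) H) := by
  set A := {x | AttacksVar q F x}
  have hcl := eq_on_keycl hsjf hq hs hagree (fun H hH => hρ H (List.mem_cons_of_mem F hH)) hν
  have heq_ρ : ∀ x, AttacksVar q F x ∨ ρ x = ν x → A.piecewise ρ ν x = ρ x := by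
    intro x hx
    by_cases hatt : x ∈ A
    · exact Set.piecewise_eq_of_mem A ρ ν hatt
    · rw [Set.piecewise_eq_of_notMem A ρ ν hatt, hx.resolve_left hatt]
  have heq_ν : ∀ x, ¬ AttacksVar q F x → A.piecewise ρ ν x = ν x := fun x hx =>
    Set.piecewise_eq_of_notMem A ρ ν hx
  intro H hH
  rcases List.mem_cons.1 hH with rfl | hHB
  · rw [applyAtom_eq_iff.2 fun x hx => heq_ρ x ?_]
    · exact hρ H hH
    by_cases hkey : x ∈ H.keyVars
    · exact Or.inr (hagree x (Finset.mem_union_right _ hkey))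
    by_cases hxcl : x ∈ keycl H q
    · exact Or.inr (hcl x hxcl)
    · exact Or.inl (attacksVar_of_mem_notkeyVars (Finset.mem_sdiff.2 ⟨hx, hkey⟩) hxcl)
  by_cases hmeet : ∃ z ∈ H.allVars, AttacksVar q F z
  · obtain ⟨z, hzH, hz⟩ := hmeet
    have hHq : H ∈ q := by rw [hq]; simp [hHB]
    rw [applyAtom_eq_iff.2 fun x hx => heq_ρ x ?_]
    · exact hρ H hH
    by_cases hxcl : x ∈ keycl F q
    · exact Or.inr (hcl x hxcl)
    · exact Or.inl (hz.extend hHq hzH hx hxcl)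
  · push Not at hmeet
    rw [applyAtom_eq_iff.2 fun x hx => heq_ν x (hmeet x hx)]
    exact hν H hHB

lemma EntailsOn.glue {c B : List DBAtom} {F G : DBAtom} (hsjf : SelfJoinFree (c ++ F :: G :: B))
    (hFG : ¬ AttacksAtom (c ++ F :: G :: B) F G) {s : Finset DBFact} (hs : DBConsistent s)
    {θ : Assignment} (h₁ : EntailsOn s θ (qVars c ∪ F.keyVars) (F :: G :: B))
    (h₂ : EntailsOn s θ (qVars (c ++ [F]) ∪ G.keyVars) (G :: B)) :
    EntailsOn s θ (qVars c ∪ F.keyVars ∪ G.keyVars) (F :: G :: B) := by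
  obtain ⟨ρ, hρθ, hρ⟩ := h₁
  obtain ⟨ν, hνθ, hν⟩ := h₂
  have hνθ' : ∀ x ∈ qVars c ∪ F.keyVars, ν x = θ x := by
    refine fun x hx => hνθ x (Finset.mem_union_left _ ?_)
    rw [qVars_append]
    simpa [qVars] using Finset.union_subset_union_right (keyVars_subset_allVars F) hx
  have hagree : ∀ x ∈ qVars c ∪ F.keyVars, ρ x = ν x := fun x hx =>
    (hρθ x hx).trans (hνθ' x hx).symm
  refine ⟨_, fun x hx => ?_, atomIn_piecewise_attacksVar hsjf rfl hs hagree hρ hν⟩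
  set A := {x | AttacksVar (c ++ F :: G :: B) F x}
  rcases Finset.mem_union.1 hx with hx | hx
  · by_cases hatt : x ∈ A
    · rw [Set.piecewise_eq_of_mem A ρ ν hatt, hρθ x hx]
    · rw [Set.piecewise_eq_of_notMem A ρ ν hatt, hνθ' x hx]
  · have hatt : x ∉ A := fun hatt => hFG ⟨x, keyVars_subset_allVars G hx, hatt⟩
    rw [Set.piecewise_eq_of_notMem A ρ ν hatt]
    exact hνθ x (Finset.mem_union_right _ hx)

lemma uVars_mono (q : List DBAtom) {m m' : ℕ} (h : m ≤ m') : uVars q m ⊆ uVars q m' := by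
  intro x hx
  obtain ⟨H, hH, hxH⟩ := mem_qVars_iff.1 hx
  exact mem_qVars_iff.2 ⟨H, (List.take_prefix_take_left h).subset hH, hxH⟩

lemma uVars_length (q : List DBAtom) : uVars q q.length = qVars q := by
  simp [uVars]

lemma uVars_subset_qVars (q : List DBAtom) (m : ℕ) : uVars q m ⊆ qVars q := by
  intro x hx
  obtain ⟨H, hH, hxH⟩ := mem_qVars_iff.1 hx
  exact mem_qVars_iff.2 ⟨H, List.take_subset m q hH, hxH⟩

lemma headKey_drop_subset_uVars_succ (q : List DBAtom) (m : ℕ) :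
    headKey (q.drop m) ⊆ uVars q (m + 1) := by
  by_cases hm : m < q.length
  · intro x hx
    rw [← List.getElem_cons_drop hm, headKey] at hx
    refine mem_qVars_iff.2 ⟨q[m], ?_, keyVars_subset_allVars _ hx⟩
    exact List.mem_take_iff_getElem.2 ⟨m, by omega, rfl⟩
  · simp [List.drop_eq_nil_of_le (not_lt.1 hm), headKey]

lemma IsForallEmb.isLEmb {q : List DBAtom} {db : Finset DBFact} {θ : Assignment} :
    ∀ {ℓ : ℕ}, IsForallEmb q db ℓ θ → IsLEmb q db ℓ θ
  | 0, h => h.1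
  | _ + 1, h => h.1

lemma isForallEmb_restrict_iff {q : List DBAtom} {db : Finset DBFact} {θ : Assignment}
    (hθ : θ.Dom = ↑(qVars q)) (hdb : EntailsOn db θ (qVars q) q) (ℓ : ℕ) :
    IsForallEmb q db ℓ (θ.restrict ↑(uVars q ℓ)) ↔
      (∀ r, IsRepair db r → Entails r emptyAssignment q) ∧ ∀ m < ℓ, ∀ r, IsRepair db r →
        Entails r (θ.restrict ↑(uVars q m ∪ headKey (q.drop m))) (q.drop m) := by
  have hlemb (ℓ : ℕ) : IsLEmb q db ℓ (θ.restrict ↑(uVars q ℓ)) := by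
    have hsub : ↑(uVars q ℓ) ⊆ θ.Dom := hθ ▸ Finset.coe_subset.2 (uVars_subset_qVars q ℓ)
    refine ⟨by rw [Assignment.dom_restrict, Set.inter_eq_right.2 hsub], ?_⟩
    exact (entails_restrict_iff hsub).2 (hdb.mono (uVars_subset_qVars q ℓ))
  induction ℓ with
  | zero => simp [IsForallEmb, hlemb 0]
  | succ n ih =>
    have hsub : ↑(uVars q n) ∪ ↑(headKey (q.drop n)) ⊆ (↑(uVars q (n + 1)) : Set Var) := by
      rw [← Finset.coe_union, Finset.coe_subset]
      exact Finset.union_subset (uVars_mono q n.le_succ) (headKey_drop_subset_uVars_succ q n)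
    simp only [IsForallEmb, hlemb, true_and, Assignment.restrict_restrict,
      Set.inter_eq_right.2 hsub,
      Set.inter_eq_right.2 (Finset.coe_subset.2 (uVars_mono q n.le_succ)), ih,
      Nat.lt_succ_iff_lt_or_eq, or_imp, forall_and, forall_eq, Finset.coe_union]
    tauto

/-- Condition (i) of the ∀embedding definition at the atom `H` of the split `a ++ H :: b`. -/
def ForallLevel (db : Finset DBFact) (θ : Assignment) (a : List DBAtom) (H : DBAtom)
    (b : List DBAtom) : Prop :=
  ∀ r, IsRepair db r → EntailsOn r θ (qVars a ∪ H.keyVars) (H :: b)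

lemma forall_entails_drop_iff_forallLevel {q : List DBAtom} {db : Finset DBFact}
    {θ : Assignment} (hθ : θ.Dom = ↑(qVars q)) :
    (∀ m < q.length, ∀ r, IsRepair db r →
      Entails r (θ.restrict ↑(uVars q m ∪ headKey (q.drop m))) (q.drop m)) ↔
      ∀ a H b, q = a ++ H :: b → ForallLevel db θ a H b := by
  have hsub (m : ℕ) : ↑(uVars q m ∪ headKey (q.drop m)) ⊆ θ.Dom :=
    hθ ▸ Finset.coe_subset.2 (Finset.union_subset (uVars_subset_qVars q m)
      ((headKey_drop_subset_uVars_succ q m).trans (uVars_subset_qVars q _)))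
  simp only [entails_restrict_iff (hsub _)]
  constructor
  · rintro h a H b rfl r hr
    have := h a.length (by simp) r hr
    rwa [uVars, List.take_left, List.drop_left, headKey] at this
  · intro h m hm r hr
    rw [← List.getElem_cons_drop hm]
    exact h (q.take m) q[m] (q.drop (m + 1)) (by simp) r hr

lemma isForallEmb_length_iff {q : List DBAtom} {db : Finset DBFact} {θ : Assignment} :
    IsForallEmb q db q.length θ ↔
      θ.Dom = ↑(qVars q) ∧ EntailsOn db θ (qVars q) q ∧
        (∀ r, IsRepair db r → Entails r emptyAssignment q) ∧
        ∀ a H b, q = a ++ H :: b → ForallLevel db θ a H b := by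
  have hθU (hθ : θ.Dom = ↑(qVars q)) : θ.restrict ↑(uVars q q.length) = θ := by
    rw [uVars_length]
    exact Assignment.restrict_eq_self hθ.le
  constructor
  · intro h
    have hθ : θ.Dom = ↑(qVars q) := uVars_length q ▸ h.isLEmb.1
    have hdb : EntailsOn db θ (qVars q) q := by
      rw [← entails_restrict_iff hθ.ge, ← uVars_length, hθU hθ]
      exact h.isLEmb.2
    rw [← hθU hθ] at h
    obtain ⟨hbase, hlevel⟩ := (isForallEmb_restrict_iff hθ hdb _).1 h
    exact ⟨hθ, hdb, hbase, (forall_entails_drop_iff_forallLevel hθ).1 hlevel⟩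
  · rintro ⟨hθ, hdb, hbase, hlevel⟩
    rw [← hθU hθ]
    exact (isForallEmb_restrict_iff hθ hdb _).2
      ⟨hbase, (forall_entails_drop_iff_forallLevel hθ).2 hlevel⟩

section Swap

variable {c B : List DBAtom} {F G : DBAtom} {db : Finset DBFact} {θ : Assignment}

lemma ForallLevel.swap_fst (hsjf : SelfJoinFree (c ++ F :: G :: B))
    (hFG : ¬ AttacksAtom (c ++ F :: G :: B) F G) (h₁ : ForallLevel db θ c F (G :: B))
    (h₂ : ForallLevel db θ (c ++ [F]) G B) : ForallLevel db θ c G (F :: B) := fun r hr =>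
  ((EntailsOn.glue hsjf hFG hr.2.1 (h₁ r hr) (h₂ r hr)).mono
    (Finset.union_subset_union_left Finset.subset_union_left)).perm (List.Perm.swap G F B)

/-- Glue in a repair `r'` that contains the fact `θ(G)`; there `θ(G)` pins down
all of `G`, and the atoms other than `G` carry over to `r` since `r' ⊆ insert θ(G) r`. -/
lemma ForallLevel.swap_snd (hsjf : SelfJoinFree (c ++ F :: G :: B))
    (hFG : ¬ AttacksAtom (c ++ F :: G :: B) F G) (hG : AtomIn db (applyAtom θ G))
    (h₁ : ForallLevel db θ c F (G :: B)) (h₂ : ForallLevel db θ (c ++ [F]) G B) :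
    ForallLevel db θ (c ++ [G]) F B := by
  intro r hr
  obtain ⟨f₀, hf₀, hGf₀⟩ := atomIn_iff.1 hG
  obtain ⟨r', hr', hf₀r', hr'r⟩ := hr.exists_repair_mem_subset_insert hf₀
  obtain ⟨μ, hμθ, hμ⟩ := EntailsOn.glue hsjf hFG hr'.2.1 (h₁ r' hr') (h₂ r' hr')
  have hGμ : ∀ x ∈ G.allVars, μ x = θ x :=
    (hμ G (by simp)).eq_on_allVars hr'.2.1 (atomIn_iff.2 ⟨f₀, hf₀r', hGf₀⟩)
      fun x hx => hμθ x (Finset.mem_union_right _ hx)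
  have hsjfG : SelfJoinFree (G :: (c ++ F :: B)) :=
    hsjf.perm (by simpa using List.perm_middle (l₁ := c ++ [F]) (a := G) (l₂ := B))
  refine ⟨μ, fun x hx => ?_, fun H hH => ?_⟩
  · simp only [qVars_append, Finset.mem_union] at hx
    rcases hx with (hx | hx) | hx
    · exact hμθ x (by simp [hx])
    · exact hGμ x (by simpa [qVars] using hx)
    · exact hμθ x (by simp [hx])
  · obtain ⟨f, hf, hHf⟩ := atomIn_iff.1 (hμ H (List.cons_subset_cons F (List.subset_cons_self G B) hH))
    refine atomIn_iff.2 ⟨f, (Finset.mem_insert.1 (hr'r hf)).resolve_left fun hff₀ => ?_, hHf⟩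
    refine hsjfG.rel_ne (List.mem_append_right c hH) ?_
    have hHrel := congrArg DBAtom.rel hHf
    have hGrel := congrArg DBAtom.rel hGf₀
    simp only [applyAtom] at hHrel hGrel
    rw [hHrel, hGrel, hff₀]

end Swap

theorem isForallEmb_swap {c B : List DBAtom} {F G : DBAtom} {db : Finset DBFact}
    {θ : Assignment} (hsjf : SelfJoinFree (c ++ F :: G :: B))
    (hFG : ¬ AttacksAtom (c ++ F :: G :: B) F G)
    (h : IsForallEmb (c ++ F :: G :: B) db (c ++ F :: G :: B).length θ) :
    IsForallEmb (c ++ G :: F :: B) db (c ++ G :: F :: B).length θ := by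
  have hperm : (c ++ F :: G :: B).Perm (c ++ G :: F :: B) := .append_left c (.swap G F B)
  rw [isForallEmb_length_iff] at h ⊢
  obtain ⟨hθ, hdb, hbase, hlev⟩ := h
  refine ⟨qVars_perm hperm ▸ hθ, qVars_perm hperm ▸ hdb.perm hperm,
    fun r hr => (hbase r hr).perm hperm, fun a H b hsplit => ?_⟩
  rcases List.append_cons_eq_append_cons_cons hsplit.symm with
    ⟨c', rfl, rfl⟩ | ⟨rfl, rfl, rfl⟩ | ⟨rfl, rfl, rfl⟩ | ⟨a', rfl, rfl⟩
  · refine fun r hr => (hlev a H (c' ++ F :: G :: B) (by simp) r hr).perm ?_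
    exact .cons H (.append_left c' (.swap G F B))
  · exact ForallLevel.swap_fst hsjf hFG (hlev _ _ _ rfl) (hlev _ _ _ (by simp))
  · refine ForallLevel.swap_snd hsjf hFG (hdb.atomIn (by simp) fun x hx => ?_)
      (hlev _ _ _ rfl) (hlev _ _ _ (by simp))
    exact mem_qVars_iff.2 ⟨_, by simp, hx⟩
  · have := hlev (c ++ F :: G :: a') H b (by simp)
    rwa [ForallLevel, qVars_perm (.append_left c (.swap G F a'))] at this

theorem stmt0_general
    (q₁ q₂ : List DBAtom) (hperm : q₁.Perm q₂)
    (hsjf : SelfJoinFree q₁)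
    (ht₂ : IsTopoSort q₂)
    (db : Finset DBFact) (θ : Assignment)
    (h : IsForallEmb q₁ db q₁.length θ) :
    IsForallEmb q₂ db q₂.length θ := by
  refine (hperm.of_swap (P := fun q => q.Perm q₂ ∧ IsForallEmb q db q.length θ) ?_
    (ht₂.pairwise (hsjf.perm hperm).nodup) ⟨hperm, h⟩).2
  rintro c F G B hFG ⟨hq, hemb⟩
  refine ⟨(List.Perm.append_left c (.swap F G B)).trans hq, isForallEmb_swap ?_ ?_ hemb⟩
  · exact hsjf.perm (hperm.trans hq.symm)
  · rwa [attacksAtom_perm hq]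

/-- All topological sorts of an acyclic attack graph yield the same
n-∀embeddings. -/
theorem stmt0
    (q₁ q₂ : List DBAtom) (hperm : q₁.Perm q₂)
    (hsjf : SelfJoinFree q₁)
    (ht₁ : IsTopoSort q₁) (ht₂ : IsTopoSort q₂)
    (db : Finset DBFact) (θ : Assignment)
    (h : IsForallEmb q₁ db q₁.length θ) :
    IsForallEmb q₂ db q₂.length θ :=
  stmt0_general q₁ q₂ hperm hsjf ht₂ db θ h
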